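/- Let K*_{n1,n2}(·;q1,q2;x,y) be the bivariate Dunkl q-Szász-Mirakjan-Kantorovich-Stancu operator. Then for all n1,n2 ∈ ℕ⁺, 0<q1,q2<1, μ1,μ2>1/2, α1,α2,β1,β2 ≥ 0 and x,y ≥ 0, applying the operator to the test function e_{0,1}(u,v)=v gives K*_{n1,n2}(e_{0,1};q1,q2;x,y) = (n2/(n2+β2))·(α2/n2 + 1/([2]_{q2}[n2]_{q2})) + (2n2·q2/([2]_{q2}(n2+β2)))·y. -/

import Mathlib

/-- The `q`-number `[x]_q = (1 - q^x)/(1 - q)` for a real exponent `x`. -/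
noncomputable def qNum (q x : ℝ) : ℝ := (1 - q ^ x) / (1 - q)

/-- `θ_k = 0` if `k` is even and `1` if `k` is odd. -/
def theta (k : ℕ) : ℕ := if Even k then 0 else 1

/-- The Dunkl `q`-gamma coefficients: `γ_{μ,q}(0) = 1`,
`γ_{μ,q}(k+1) = [2μθ_{k+1} + k + 1]_q ⬝ γ_{μ,q}(k)`. -/
noncomputable def gammaD (mu q : ℝ) : ℕ → ℝ
  | 0 => 1
  | k + 1 => qNum q (2 * mu * (theta (k + 1) : ℝ) + ((k : ℝ) + 1)) * gammaD mu q k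

/-- The Dunkl `q`-exponential `E_{μ,q}(x) = Σ q^{k(k-1)/2} x^k / γ_{μ,q}(k)`. -/
noncomputable def EDunkl (mu q x : ℝ) : ℝ :=
  ∑' k : ℕ, q ^ (k * (k - 1) / 2) * x ^ k / gammaD mu q k

/-- The Jackson `q`-integral `∫_a^b f(t) d_q t`. -/
noncomputable def jacksonInt (q : ℝ) (f : ℝ → ℝ) (a b : ℝ) : ℝ :=
  (1 - q) * (b * ∑' j : ℕ, q ^ j * f (b * q ^ j) - a * ∑' j : ℕ, q ^ j * f (a * q ^ j))

/-- Lower endpoint `[k + 2μθ_k]_q / (q^{k-2} [n]_q)`. -/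
noncomputable def lowB (q mu : ℝ) (n k : ℕ) : ℝ :=
  qNum q ((k : ℝ) + 2 * mu * (theta k : ℝ)) / (q ^ ((k : ℝ) - 2) * qNum q (n : ℝ))

/-- Upper endpoint `([k + 1 + 2μθ_k]_q - 1) / (q^{k-1} [n]_q) + 1/[n]_q`. -/
noncomputable def uppB (q mu : ℝ) (n k : ℕ) : ℝ :=
  (qNum q ((k : ℝ) + 1 + 2 * mu * (theta k : ℝ)) - 1) / (q ^ ((k : ℝ) - 1) * qNum q (n : ℝ))
    + 1 / qNum q (n : ℝ)

/-- The Dunkl `q`-Szász-Mirakjan-Kantorovich-Stancu operator `K̃_{n,q}(f;x)`. -/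
noncomputable def KT (n : ℕ) (q mu α β : ℝ) (f : ℝ → ℝ) (x : ℝ) : ℝ :=
  qNum q (n : ℝ) / EDunkl mu q (qNum q (n : ℝ) * x) *
    ∑' k : ℕ, (qNum q (n : ℝ) * x) ^ k / gammaD mu q k * q ^ (k * (k - 1) / 2) *
      jacksonInt q (fun t => f (((n : ℝ) * t + α) / ((n : ℝ) + β))) (lowB q mu n k) (uppB q mu n k)

/-- The bivariate Dunkl `q`-Szász-Mirakjan-Kantorovich-Stancu operator
`K*_{n₁,n₂}(f; q₁, q₂; x, y)`. -/
noncomputable def KB (n₁ n₂ : ℕ) (q₁ q₂ mu₁ mu₂ α₁ α₂ β₁ β₂ : ℝ) (f : ℝ → ℝ → ℝ)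
    (x y : ℝ) : ℝ :=
  qNum q₁ (n₁ : ℝ) * qNum q₂ (n₂ : ℝ) /
      (EDunkl mu₁ q₁ (qNum q₁ (n₁ : ℝ) * x) * EDunkl mu₂ q₂ (qNum q₂ (n₂ : ℝ) * y)) *
    ∑' k₁ : ℕ, ∑' k₂ : ℕ,
      (qNum q₁ (n₁ : ℝ) * x) ^ k₁ / gammaD mu₁ q₁ k₁ *
        ((qNum q₂ (n₂ : ℝ) * y) ^ k₂ / gammaD mu₂ q₂ k₂) *
        q₁ ^ (k₁ * (k₁ - 1) / 2) * q₂ ^ (k₂ * (k₂ - 1) / 2) *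
        jacksonInt q₂ (fun t =>
            jacksonInt q₁ (fun s =>
                f (((n₁ : ℝ) * s + α₁) / ((n₁ : ℝ) + β₁)) (((n₂ : ℝ) * t + α₂) / ((n₂ : ℝ) + β₂)))
              (lowB q₁ mu₁ n₁ k₁) (uppB q₁ mu₁ n₁ k₁))
          (lowB q₂ mu₂ n₂ k₂) (uppB q₂ mu₂ n₂ k₂)

/-!
The test function `e_{0,1}` depends on the second variable only. The inner Jackson integral of a
constant over `[A_k, B_k]` is that constant times `B_k - A_k = 1/[n₁]_{q₁}`, and summing the Dunkl
weights over `k₁` gives `E_{μ₁,q₁}([n₁]_{q₁} x)`, which cancels the normalisation: the bivariate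
operator reduces to the univariate one applied to `v ↦ v`. There the Jackson integral of an affine
function is explicit and, since `B_k - A_k` does not depend on `k`, it is affine in `A_k`. Finally
`A_0 = 0` and `w_{k+1} A_{k+1} = (q z/[n]_q) w_k` for the Dunkl weights `w_k`, so an index shift
gives `Σ w_k A_k = (q z/[n]_q) E_{μ,q}(z)`.
-/

open Filter Topology

/-- The `k`-th term of `EDunkl mu q z`, with its factors in the order in which `KT` writes them. -/
noncomputable def dunklWeight (mu q z : ℝ) (k : ℕ) : ℝ :=
  z ^ k / gammaD mu q k * q ^ (k * (k - 1) / 2)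

section QNumber

variable {q : ℝ}

lemma qNum_pos (hq0 : 0 < q) (hq1 : q < 1) {x : ℝ} (hx : 0 < x) : 0 < qNum q x :=
  div_pos (sub_pos.2 (Real.rpow_lt_one hq0.le hq1 hx)) (sub_pos.2 hq1)

lemma one_le_qNum (hq0 : 0 < q) (hq1 : q < 1) {x : ℝ} (hx : 1 ≤ x) : 1 ≤ qNum q x := by
  have h : q ^ x ≤ q := by simpa using Real.rpow_le_rpow_of_exponent_ge hq0 hq1.le hx
  rw [qNum, le_div_iff₀ (sub_pos.2 hq1)]
  linarith

lemma qNum_one_add (hq0 : 0 < q) (hq1 : q ≠ 1) (x : ℝ) : qNum q (1 + x) = 1 + q * qNum q x := by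
  have h1q : 1 - q ≠ 0 := sub_ne_zero.2 hq1.symm
  rw [qNum, qNum, Real.rpow_add hq0, Real.rpow_one]
  field_simp
  ring

lemma qNum_two (hq1 : q ≠ 1) : qNum q 2 = 1 + q := by
  have h1q : 1 - q ≠ 0 := sub_ne_zero.2 hq1.symm
  rw [qNum, Real.rpow_two]
  field_simp
  ring

end QNumber

section DunklExponential

variable {mu q : ℝ}

lemma one_le_qNum_gammaD_factor (hq0 : 0 < q) (hq1 : q < 1) (hmu : 0 ≤ mu) (k : ℕ) :
    1 ≤ qNum q (2 * mu * (theta (k + 1) : ℝ) + ((k : ℝ) + 1)) :=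
  one_le_qNum hq0 hq1 <|
    (le_add_of_nonneg_left k.cast_nonneg).trans (le_add_of_nonneg_left (by positivity))

lemma one_le_gammaD (hq0 : 0 < q) (hq1 : q < 1) (hmu : 0 ≤ mu) (k : ℕ) : 1 ≤ gammaD mu q k := by
  induction k with
  | zero => simp [gammaD]
  | succ k ih => exact one_le_mul_of_one_le_of_one_le (one_le_qNum_gammaD_factor hq0 hq1 hmu k) ih

lemma dunklWeight_succ (z : ℝ) (k : ℕ) :
    dunklWeight mu q z (k + 1) =
      z * q ^ k / qNum q (2 * mu * (theta (k + 1) : ℝ) + ((k : ℝ) + 1)) * dunklWeight mu q z k := by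
  simp only [dunklWeight, gammaD, Nat.triangle_succ, pow_add, pow_one]
  ring

lemma summable_dunklWeight (hq0 : 0 < q) (hq1 : q < 1) (hmu : 0 ≤ mu) (z : ℝ) :
    Summable (dunklWeight mu q z) := by
  refine summable_of_ratio_norm_eventually_le (r := 1 / 2) (by norm_num) ?_
  have hlim : Tendsto (fun k : ℕ => |z| * q ^ k) atTop (𝓝 0) := by
    simpa using (tendsto_pow_atTop_nhds_zero_of_lt_one hq0.le hq1).const_mul |z|
  filter_upwards [hlim.eventually_le_const (by norm_num : (0 : ℝ) < 1 / 2)] with k hk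
  have hG := one_le_qNum_gammaD_factor hq0 hq1 hmu k
  have hratio : ‖z * q ^ k / qNum q (2 * mu * (theta (k + 1) : ℝ) + ((k : ℝ) + 1))‖ ≤ 1 / 2 := by
    rw [norm_div, norm_mul, norm_pow, Real.norm_of_nonneg hq0.le,
      Real.norm_of_nonneg (zero_le_one.trans hG), Real.norm_eq_abs]
    exact (div_le_self (by positivity) hG).trans hk
  rw [dunklWeight_succ, norm_mul]
  exact mul_le_mul_of_nonneg_right hratio (norm_nonneg _)

lemma tsum_dunklWeight (z : ℝ) : ∑' k, dunklWeight mu q z k = EDunkl mu q z :=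
  tsum_congr fun k => by rw [dunklWeight]; ring

lemma hasSum_dunklWeight (hq0 : 0 < q) (hq1 : q < 1) (hmu : 0 ≤ mu) (z : ℝ) :
    HasSum (dunklWeight mu q z) (EDunkl mu q z) :=
  tsum_dunklWeight (mu := mu) (q := q) z ▸ (summable_dunklWeight hq0 hq1 hmu z).hasSum

lemma EDunkl_pos (hq0 : 0 < q) (hq1 : q < 1) (hmu : 0 ≤ mu) {z : ℝ} (hz : 0 ≤ z) :
    0 < EDunkl mu q z := by
  have hnonneg : ∀ k, 0 ≤ dunklWeight mu q z k := fun k => by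
    have := one_le_gammaD hq0 hq1 hmu k
    rw [dunklWeight]
    positivity
  rw [← tsum_dunklWeight]
  refine lt_of_lt_of_le ?_ ((summable_dunklWeight hq0 hq1 hmu z).le_tsum 0 fun k _ => hnonneg k)
  simp [dunklWeight, gammaD]

end DunklExponential

section Jackson

variable {q : ℝ}

lemma jacksonInt_affine (hq0 : 0 ≤ q) (hq1 : q < 1) (c₁ c₀ a b : ℝ) :
    jacksonInt q (fun t => c₁ * t + c₀) a b = c₁ * (b ^ 2 - a ^ 2) / (1 + q) + c₀ * (b - a) := by
  have hq2 : q ^ 2 < 1 := by nlinarith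
  have hseries : ∀ c : ℝ, ∑' j : ℕ, q ^ j * (c₁ * (c * q ^ j) + c₀)
      = c₁ * c / (1 - q ^ 2) + c₀ / (1 - q) := fun c => by
    have hsplit : ∀ j : ℕ, q ^ j * (c₁ * (c * q ^ j) + c₀) = c₁ * c * (q ^ 2) ^ j + c₀ * q ^ j :=
      fun j => by rw [← pow_mul]; ring
    rw [tsum_congr hsplit,
      ((summable_geometric_of_lt_one (by positivity) hq2).mul_left _).tsum_add
        ((summable_geometric_of_lt_one hq0 hq1).mul_left _),
      tsum_mul_left, tsum_mul_left, tsum_geometric_of_lt_one (by positivity) hq2,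
      tsum_geometric_of_lt_one hq0 hq1]
    ring
  have h1 : 1 - q ≠ 0 := by linarith
  have h2 : 1 + q ≠ 0 := by linarith
  rw [jacksonInt, hseries, hseries, show 1 - q ^ 2 = (1 - q) * (1 + q) by ring]
  field_simp
  ring

lemma jacksonInt_const (hq0 : 0 ≤ q) (hq1 : q < 1) (c a b : ℝ) :
    jacksonInt q (fun _ => c) a b = c * (b - a) := by
  simpa using jacksonInt_affine hq0 hq1 0 c a b

lemma jacksonInt_mul_const (f : ℝ → ℝ) (c a b : ℝ) :
    jacksonInt q (fun t => f t * c) a b = jacksonInt q f a b * c := by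
  simp only [jacksonInt, ← mul_assoc, tsum_mul_right]
  ring

end Jackson

section Endpoints

variable {q mu : ℝ} {n : ℕ}

lemma lowB_zero : lowB q mu n 0 = 0 := by
  simp [lowB, theta, qNum]

lemma uppB_eq_lowB_add (hq0 : 0 < q) (hq1 : q ≠ 1) (k : ℕ) :
    uppB q mu n k = lowB q mu n k + 1 / qNum q n := by
  have hpow : q ^ ((k : ℝ) - 1) = q * q ^ ((k : ℝ) - 2) := by
    rw [show (k : ℝ) - 1 = 1 + ((k : ℝ) - 2) by ring, Real.rpow_add hq0, Real.rpow_one]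
  rw [uppB, lowB, add_comm (k : ℝ) 1, add_assoc, qNum_one_add hq0 hq1, add_sub_cancel_left, hpow,
    mul_assoc q, mul_div_mul_left _ _ hq0.ne']

lemma dunklWeight_succ_mul_lowB (hq0 : 0 < q) (hq1 : q < 1) (hmu : 0 ≤ mu) (z : ℝ) (k : ℕ) :
    dunklWeight mu q z (k + 1) * lowB q mu n (k + 1) = q * z / qNum q n * dunklWeight mu q z k := by
  have hG := one_le_qNum_gammaD_factor hq0 hq1 hmu k
  rw [dunklWeight_succ, lowB,
    show ((k + 1 : ℕ) : ℝ) + 2 * mu * (theta (k + 1) : ℝ)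
      = 2 * mu * (theta (k + 1) : ℝ) + ((k : ℝ) + 1) by push_cast; ring,
    show ((k + 1 : ℕ) : ℝ) - 2 = (k : ℝ) - 1 by push_cast; ring,
    Real.rpow_sub_one hq0.ne', Real.rpow_natCast]
  field_simp

lemma hasSum_dunklWeight_mul_lowB (hq0 : 0 < q) (hq1 : q < 1) (hmu : 0 ≤ mu) (z : ℝ) :
    HasSum (fun k => dunklWeight mu q z k * lowB q mu n k) (q * z / qNum q n * EDunkl mu q z) := by
  have hshift : HasSum (fun k => dunklWeight mu q z (k + 1) * lowB q mu n (k + 1))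
      (q * z / qNum q n * EDunkl mu q z) := by
    simpa only [dunklWeight_succ_mul_lowB hq0 hq1 hmu] using
      (hasSum_dunklWeight hq0 hq1 hmu z).mul_left (q * z / qNum q n)
  have h := (hasSum_nat_add_iff (f := fun k => dunklWeight mu q z k * lowB q mu n k) 1).mp hshift
  rwa [Finset.sum_range_one, lowB_zero, mul_zero, add_zero] at h

lemma tsum_dunklWeight_mul_affine_lowB (hq0 : 0 < q) (hq1 : q < 1) (hmu : 0 ≤ mu) (z A B : ℝ) :
    ∑' k, dunklWeight mu q z k * (A * lowB q mu n k + B) =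
      (A * (q * z / qNum q n) + B) * EDunkl mu q z := by
  calc ∑' k, dunklWeight mu q z k * (A * lowB q mu n k + B)
      = ∑' k, (A * (dunklWeight mu q z k * lowB q mu n k) + B * dunklWeight mu q z k) :=
        tsum_congr fun k => by ring
    _ = _ := by
        rw [(((hasSum_dunklWeight_mul_lowB hq0 hq1 hmu z).mul_left A).add
          ((hasSum_dunklWeight hq0 hq1 hmu z).mul_left B)).tsum_eq]
        ring

end Endpoints

lemma KT_apply_id {n : ℕ} {q mu α β : ℝ} (hn : 0 < n) (hq0 : 0 < q) (hq1 : q < 1) (hmu : 0 ≤ mu)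
    {y : ℝ} (hy : 0 ≤ y) :
    KT n q mu α β (fun v => v) y =
      (n : ℝ) / ((n : ℝ) + β) * (α / (n : ℝ) + 1 / (qNum q 2 * qNum q (n : ℝ)))
        + 2 * (n : ℝ) * q / (qNum q 2 * ((n : ℝ) + β)) * y := by
  have hn' : (0 : ℝ) < n := by exact_mod_cast hn
  have hN : 0 < qNum q n := qNum_pos hq0 hq1 hn'
  have hE : EDunkl mu q (qNum q n * y) ≠ 0 := (EDunkl_pos hq0 hq1 hmu (by positivity)).ne'
  have hJ : ∀ k, jacksonInt q (fun t => (n * t + α) / (n + β)) (lowB q mu n k) (uppB q mu n k) =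
      2 * n / ((n + β) * (1 + q) * qNum q n) * lowB q mu n k
        + (n / ((n + β) * (1 + q) * qNum q n ^ 2) + α / ((n + β) * qNum q n)) := fun k => by
    have haffine : (fun t : ℝ => (n * t + α) / (n + β)) = fun t => n / (n + β) * t + α / (n + β) := by
      funext t; ring
    rw [haffine, jacksonInt_affine hq0.le hq1, uppB_eq_lowB_add hq0 hq1.ne]
    field_simp
    ring
  rw [KT]
  simp only [hJ]
  change _ * ∑' k, dunklWeight mu q (qNum q n * y) k * _ = _
  rw [tsum_dunklWeight_mul_affine_lowB hq0 hq1 hmu, qNum_two hq1.ne]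
  field_simp
  ring

section Operators

variable {n₁ n₂ : ℕ} {q₁ q₂ mu₁ mu₂ α₁ α₂ β₁ β₂ x y : ℝ}

lemma KB_eq_KT_of_snd (hn₁ : 0 < n₁) (hq₁0 : 0 < q₁) (hq₁1 : q₁ < 1) (hmu₁ : 0 ≤ mu₁)
    (hx : 0 ≤ x) (g : ℝ → ℝ) :
    KB n₁ n₂ q₁ q₂ mu₁ mu₂ α₁ α₂ β₁ β₂ (fun _ v => g v) x y = KT n₂ q₂ mu₂ α₂ β₂ g y := by
  have hN₁ : 0 < qNum q₁ n₁ := qNum_pos hq₁0 hq₁1 (by exact_mod_cast hn₁)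
  have hE₁ : EDunkl mu₁ q₁ (qNum q₁ n₁ * x) ≠ 0 := (EDunkl_pos hq₁0 hq₁1 hmu₁ (by positivity)).ne'
  have hinner : ∀ k (c : ℝ), jacksonInt q₁ (fun _ => c) (lowB q₁ mu₁ n₁ k) (uppB q₁ mu₁ n₁ k) =
      c * (qNum q₁ n₁)⁻¹ := fun k c => by
    rw [jacksonInt_const hq₁0.le hq₁1, uppB_eq_lowB_add hq₁0 hq₁1.ne, add_sub_cancel_left, one_div]
  calc KB n₁ n₂ q₁ q₂ mu₁ mu₂ α₁ α₂ β₁ β₂ (fun _ v => g v) x y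
      = qNum q₁ n₁ * qNum q₂ n₂ /
            (EDunkl mu₁ q₁ (qNum q₁ n₁ * x) * EDunkl mu₂ q₂ (qNum q₂ n₂ * y)) *
          ∑' k₁, ∑' k₂, (qNum q₁ n₁)⁻¹ * dunklWeight mu₁ q₁ (qNum q₁ n₁ * x) k₁ *
            (dunklWeight mu₂ q₂ (qNum q₂ n₂ * y) k₂ *
              jacksonInt q₂ (fun t => g ((n₂ * t + α₂) / (n₂ + β₂)))
                (lowB q₂ mu₂ n₂ k₂) (uppB q₂ mu₂ n₂ k₂)) := by
        simp only [KB, hinner, jacksonInt_mul_const]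
        refine congrArg _ (tsum_congr fun k₁ => tsum_congr fun k₂ => ?_)
        simp only [dunklWeight]
        ring
    _ = KT n₂ q₂ mu₂ α₂ β₂ g y := by
        simp only [tsum_mul_left, tsum_mul_right, tsum_dunklWeight]
        field_simp
        rw [KT, div_mul_eq_mul_div]
        rfl

end Operators

theorem KB_e01_general (n₁ n₂ : ℕ) (hn₁ : 0 < n₁) (hn₂ : 0 < n₂)
    (q₁ q₂ mu₁ mu₂ α₁ α₂ β₁ β₂ x y : ℝ)
    (hq₁0 : 0 < q₁) (hq₁1 : q₁ < 1) (hq₂0 : 0 < q₂) (hq₂1 : q₂ < 1)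
    (hmu₁ : 1 / 2 < mu₁) (hmu₂ : 1 / 2 < mu₂)
    (hx : 0 ≤ x) (hy : 0 ≤ y) :
    KB n₁ n₂ q₁ q₂ mu₁ mu₂ α₁ α₂ β₁ β₂ (fun _ v => v) x y =
      (n₂ : ℝ) / ((n₂ : ℝ) + β₂) * (α₂ / (n₂ : ℝ) + 1 / (qNum q₂ 2 * qNum q₂ (n₂ : ℝ)))
        + 2 * (n₂ : ℝ) * q₂ / (qNum q₂ 2 * ((n₂ : ℝ) + β₂)) * y :=
  (KB_eq_KT_of_snd hn₁ hq₁0 hq₁1 (by linarith) hx fun v => v).trans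
    (KT_apply_id hn₂ hq₂0 hq₂1 (by linarith) hy)

/-- `K*_{n₁,n₂}(e_{0,1}; q₁, q₂; x, y)
  = (n₂/(n₂+β₂))(α₂/n₂ + 1/([2]_{q₂}[n₂]_{q₂})) + (2n₂q₂/([2]_{q₂}(n₂+β₂))) y`. -/
theorem KB_e01 (n₁ n₂ : ℕ) (hn₁ : 0 < n₁) (hn₂ : 0 < n₂)
    (q₁ q₂ mu₁ mu₂ α₁ α₂ β₁ β₂ x y : ℝ)
    (hq₁0 : 0 < q₁) (hq₁1 : q₁ < 1) (hq₂0 : 0 < q₂) (hq₂1 : q₂ < 1)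
    (hmu₁ : 1 / 2 < mu₁) (hmu₂ : 1 / 2 < mu₂)
    (hα₁ : 0 ≤ α₁) (hα₂ : 0 ≤ α₂) (hβ₁ : 0 ≤ β₁) (hβ₂ : 0 ≤ β₂)
    (hx : 0 ≤ x) (hy : 0 ≤ y) :
    KB n₁ n₂ q₁ q₂ mu₁ mu₂ α₁ α₂ β₁ β₂ (fun _ v => v) x y =
      (n₂ : ℝ) / ((n₂ : ℝ) + β₂) * (α₂ / (n₂ : ℝ) + 1 / (qNum q₂ 2 * qNum q₂ (n₂ : ℝ)))
        + 2 * (n₂ : ℝ) * q₂ / (qNum q₂ 2 * ((n₂ : ℝ) + β₂)) * y :=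
  KB_e01_general n₁ n₂ hn₁ hn₂ q₁ q₂ mu₁ mu₂ α₁ α₂ β₁ β₂ x y hq₁0 hq₁1 hq₂0 hq₂1 hmu₁ hmu₂ hx hy
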